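/- Let x ∈ ℝ^N (cyclic) with d_3(x) = d(x) =: δ > 0 and x_3 > (x_2+x_4)/2 =: μ. Let x' be obtained by replacing x_3 with u. If d_3(x') ≤ d_3(x) or d_3(x') < max_i d_i(x'), then u ∈ [μ - 3δ, x_3], and in particular |u - x_3| ≤ 4δ. -/

import Mathlib

/-!
Changing `x₃` to `u` moves at most one of the two neighbours of any other index `i` (as `N ≥ 3`),
so `d_i(x') ≤ d_i(x) + |u - x₃| / 2 ≤ δ + |u - x₃| / 2`. An accepted `u` therefore satisfies
`|u - μ| ≤ δ + |u - x₃| / 2` with `x₃ = μ + δ`, which confines `u` to `[μ - 3δ, x₃]`.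
-/

open Function

noncomputable def nonconformity {N : ℕ} [NeZero N] (y : Fin N → ℝ) (i : Fin N) : ℝ :=
  |y i - (y (i - 1) + y (i + 1)) / 2|

theorem abs_update_add_update_sub_le {ι α : Type*} [DecidableEq ι] [AddCommGroup α] [LinearOrder α]
    [IsOrderedAddMonoid α] (x : ι → α) (j : ι) (u : α) {a b : ι} (hab : a ≠ b) :
    |update x j u a + update x j u b - (x a + x b)| ≤ |u - x j| := by
  by_cases ha : a = j
  · subst ha
    simp [update_of_ne hab.symm]
  · by_cases hb : b = j
    · subst hb
      simp [update_of_ne ha]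
    · simp [update_of_ne ha, update_of_ne hb]

namespace Fin

variable {N : ℕ} [NeZero N]

theorem one_ne_zero_of_two_le (hN : 2 ≤ N) : (1 : Fin N) ≠ 0 := by
  rw [Ne, Fin.ext_iff, Fin.val_one', Nat.one_mod_eq_one.mpr (by omega)]
  simp

theorem sub_one_ne_add_one (hN : 3 ≤ N) (i : Fin N) : i - 1 ≠ i + 1 := by
  rw [Ne, sub_eq_iff_eq_add, add_assoc, left_eq_add, Fin.ext_iff, Fin.val_add, Fin.val_one',
    Nat.one_mod_eq_one.mpr (by omega), Nat.mod_eq_of_lt (by omega)]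
  simp

end Fin

section Nonconformity

variable {N : ℕ} [NeZero N]

theorem nonconformity_update_self (hN : 2 ≤ N) (x : Fin N → ℝ) (j : Fin N) (u : ℝ) :
    nonconformity (update x j u) j = |u - (x (j - 1) + x (j + 1)) / 2| := by
  have h1 := Fin.one_ne_zero_of_two_le hN
  rw [nonconformity, update_self, update_of_ne (sub_eq_self.not.mpr h1),
    update_of_ne (add_ne_left.mpr h1)]

theorem nonconformity_update_le (hN : 3 ≤ N) (x : Fin N → ℝ) (u : ℝ) {i j : Fin N} (hij : i ≠ j) :
    nonconformity (update x j u) i ≤ nonconformity x i + |u - x j| / 2 := by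
  have hnbr := abs_update_add_update_sub_le x j u (Fin.sub_one_ne_add_one hN i)
  calc nonconformity (update x j u) i
      = |(x i - (x (i - 1) + x (i + 1)) / 2) -
          (update x j u (i - 1) + update x j u (i + 1) - (x (i - 1) + x (i + 1))) / 2| := by
        rw [nonconformity, update_of_ne hij]; ring_nf
    _ ≤ nonconformity x i + |u - x j| / 2 := by
        refine (abs_sub _ _).trans (add_le_add le_rfl ?_)
        rw [abs_div, abs_two]
        linarith

theorem nonconformity_update_self_le_of_accepted (hN : 3 ≤ N) {x : Fin N → ℝ} {δ : ℝ}
    (hx : ∀ i, nonconformity x i ≤ δ) {j : Fin N} {u : ℝ}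
    (hacc : nonconformity (update x j u) j ≤ δ ∨
      nonconformity (update x j u) j <
        Finset.univ.sup' Finset.univ_nonempty (nonconformity (update x j u))) :
    nonconformity (update x j u) j ≤ δ + |u - x j| / 2 := by
  rcases hacc with hle | hlt
  · linarith [abs_nonneg (u - x j)]
  · obtain ⟨k, -, hk⟩ := Finset.exists_mem_eq_sup' Finset.univ_nonempty
      (nonconformity (update x j u))
    have hkj : k ≠ j := by
      rintro rfl
      exact hlt.ne hk.symm
    linarith [nonconformity_update_le hN x u hkj, hx k]

end Nonconformity

theorem le_and_le_of_abs_sub_le_add_half {μ δ u : ℝ} (h : |u - μ| ≤ δ + |u - (μ + δ)| / 2) :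
    μ - 3 * δ ≤ u ∧ u ≤ μ + δ := by
  constructor <;>
    rcases abs_cases (u - μ) with ⟨_, _⟩ | ⟨_, _⟩ <;>
    rcases abs_cases (u - (μ + δ)) with ⟨_, _⟩ | ⟨_, _⟩ <;> linarith

theorem stmt_14 (N : ℕ) [NeZero N] (hN : 5 ≤ N) (x : Fin N → ℝ) (μ δ : ℝ)
    (hμ : μ = (x (3 - 1) + x (3 + 1)) / 2) (hδ : δ = x 3 - μ) (hδpos : 0 < δ)
    (hmax : |x 3 - (x (3 - 1) + x (3 + 1)) / 2| =
      Finset.univ.sup' Finset.univ_nonempty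
        (fun i : Fin N => |x i - (x (i - 1) + x (i + 1)) / 2|))
    (u : ℝ) (x' : Fin N → ℝ) (hx' : x' = Function.update x 3 u)
    (hacc : |x' 3 - (x' (3 - 1) + x' (3 + 1)) / 2| ≤ |x 3 - (x (3 - 1) + x (3 + 1)) / 2| ∨
      |x' 3 - (x' (3 - 1) + x' (3 + 1)) / 2| <
        Finset.univ.sup' Finset.univ_nonempty
          (fun i : Fin N => |x' i - (x' (i - 1) + x' (i + 1)) / 2|)) :
    (μ - 3 * δ ≤ u ∧ u ≤ x 3) ∧ |u - x 3| ≤ 4 * δ := by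
  subst hx'
  change nonconformity x 3 = Finset.univ.sup' _ (nonconformity x) at hmax
  change nonconformity (update x 3 u) 3 ≤ nonconformity x 3 ∨
    nonconformity (update x 3 u) 3 < Finset.univ.sup' _ (nonconformity (update x 3 u)) at hacc
  have hx3 : x 3 = μ + δ := by linarith
  have hd3 : nonconformity x 3 = δ := by
    rw [nonconformity, ← hμ, hδ, abs_of_pos (by linarith)]
  have hx : ∀ i, nonconformity x i ≤ δ := fun i =>
    hd3 ▸ hmax ▸ Finset.le_sup' (nonconformity x) (Finset.mem_univ i)
  have hd3' := nonconformity_update_self_le_of_accepted (by omega) hx (hd3 ▸ hacc)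
  rw [nonconformity_update_self (by omega), ← hμ, hx3] at hd3'
  obtain ⟨hlo, hhi⟩ := le_and_le_of_abs_sub_le_add_half hd3'
  refine ⟨⟨hlo, hx3 ▸ hhi⟩, ?_⟩
  rw [abs_sub_comm, abs_of_nonneg (by linarith)]
  linarith
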